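/- arXiv:2405.06475 — 3 statements merged into one kernel-verified Lean document; each statement's English description precedes it below -/
import Mathlib

section
/- Let R be a commutative ring and D an additive R-linear category with weak kernels. Let M : D → Mod-R be a contravariant functor which is a subfunctor of a representable functor (i.e. there is a natural monomorphism M → D(-,D) for some object D of D). Then the kernel of every natural transformation D(-,C) → M (for any object C of D) is a finitely generated D-module. Consequently, M is finitely presented if and only if M is finitely generated. -/
/-!
By Yoneda, `α ≫ ι : D(-,C₀) → D(-,D₀)` is `D(-,g)` for some `g : C₀ ⟶ D₀`. As `ι` is a
monomorphism, `α` and `D(-,g)` have the same kernel, and that kernel is the image of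
`D(-,B) → D(-,C₀)` for a weak kernel `B → C₀` of `g`. Given a finitely generated `M`, a kernel
generator of an epimorphism `D(-,D₁) → M` is then a finite presentation.
-/

open CategoryTheory Opposite

universe w v u

namespace Paper

variable (R : Type w) [CommRing R] (D : Type u) [Category.{v} D] [Preadditive D]
  [CategoryTheory.Linear R D]

instance oppositeHomModule (X Y : Dᵒᵖ) : Module R (X ⟶ Y) where
  smul r f := (r • f.unop).op
  one_smul f := Quiver.Hom.unop_inj (one_smul _ _)
  mul_smul r s f := Quiver.Hom.unop_inj (mul_smul _ _ _)
  smul_zero r := Quiver.Hom.unop_inj (smul_zero _)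
  smul_add r f g := Quiver.Hom.unop_inj (smul_add _ _ _)
  add_smul r s f := Quiver.Hom.unop_inj (add_smul _ _ _)
  zero_smul f := Quiver.Hom.unop_inj (zero_smul _ _)

instance oppositeLinear : CategoryTheory.Linear R Dᵒᵖ where
  smul_comp X Y Z r f g := by
    exact Quiver.Hom.unop_inj (CategoryTheory.Linear.comp_smul _ _ _ g.unop r f.unop)
  comp_smul X Y Z f r g := by
    exact Quiver.Hom.unop_inj (CategoryTheory.Linear.smul_comp _ _ _ r g.unop f.unop)

variable {D}

/-- `D` has weak kernels:  every morphism `g : Y ⟶ Z` admits `f : X ⟶ Y` such that the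
sequence of functors `D(-,X) → D(-,Y) → D(-,Z)` is exact. -/
def HasWeakKernels : Prop :=
  ∀ ⦃Y Z : D⦄ (g : Y ⟶ Z), ∃ (X : D) (f : X ⟶ Y),
    ∀ (W : D) (w : W ⟶ Y), w ≫ g = 0 ↔ ∃ t : W ⟶ X, t ≫ f = w

/-- A `D`-module `M` is finitely generated if there is a natural epimorphism
`D(-,D₀) → M`. -/
def IsFinitelyGenerated (M : Dᵒᵖ ⥤ ModuleCat.{v} R) : Prop :=
  ∃ (D₀ : D) (α : (linearYoneda R D).obj D₀ ⟶ M),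
    ∀ X : Dᵒᵖ, Function.Surjective (α.app X)

/-- A `D`-module `M` is finitely presented if there is an exact sequence of functors
`D(-,C₀) → D(-,D₀) → M → 0`. -/
def IsFinitelyPresented (M : Dᵒᵖ ⥤ ModuleCat.{v} R) : Prop :=
  ∃ (C₀ D₀ : D) (f : C₀ ⟶ D₀) (α : (linearYoneda R D).obj D₀ ⟶ M),
    (∀ X : Dᵒᵖ, Function.Surjective (α.app X)) ∧
    (∀ X : Dᵒᵖ, Function.Exact (((linearYoneda R D).map f).app X) (α.app X))

/-- The kernel of `α : D(-,C₀) → M` is a finitely generated `D`-module, i.e. there exist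
`B` and `g : B ⟶ C₀` such that `D(-,B) → D(-,C₀) → M` is exact (equivalently the image
of `D(-,B) → D(-,C₀)` is exactly the kernel of `α`). -/
def KernelIsFinitelyGenerated {M : Dᵒᵖ ⥤ ModuleCat.{v} R} {C₀ : D}
    (α : (linearYoneda R D).obj C₀ ⟶ M) : Prop :=
  ∃ (B : D) (g : B ⟶ C₀),
    ∀ X : Dᵒᵖ, Function.Exact (((linearYoneda R D).map g).app X) (α.app X)

section

variable {R}

theorem kernelIsFinitelyGenerated_linearYoneda_map (hwk : HasWeakKernels (D := D))
    {C₀ D₀ : D} (g : C₀ ⟶ D₀) : KernelIsFinitelyGenerated R ((linearYoneda R D).map g) :=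
  let ⟨B, f, hf⟩ := hwk g
  ⟨B, f, fun X w => hf X.unop w⟩

theorem KernelIsFinitelyGenerated.of_comp_injective {M N : Dᵒᵖ ⥤ ModuleCat.{v} R} {C₀ : D}
    {α : (linearYoneda R D).obj C₀ ⟶ M} {ι : M ⟶ N}
    (hι : ∀ X : Dᵒᵖ, Function.Injective (ι.app X))
    (h : KernelIsFinitelyGenerated R (α ≫ ι)) : KernelIsFinitelyGenerated R α := by
  obtain ⟨B, g, hg⟩ := h
  exact ⟨B, g, fun X => (hι X).comp_exact_iff_exact.1 (hg X)⟩

theorem kernelIsFinitelyGenerated_of_injective_linearYoneda (hwk : HasWeakKernels (D := D))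
    {M : Dᵒᵖ ⥤ ModuleCat.{v} R} {D₀ : D} {ι : M ⟶ (linearYoneda R D).obj D₀}
    (hι : ∀ X : Dᵒᵖ, Function.Injective (ι.app X)) {C₀ : D}
    (α : (linearYoneda R D).obj C₀ ⟶ M) : KernelIsFinitelyGenerated R α := by
  obtain ⟨g, hg⟩ := (linearYoneda R D).map_surjective (α ≫ ι)
  exact .of_comp_injective hι (hg ▸ kernelIsFinitelyGenerated_linearYoneda_map hwk g)

theorem IsFinitelyPresented.isFinitelyGenerated {M : Dᵒᵖ ⥤ ModuleCat.{v} R}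
    (h : IsFinitelyPresented R M) : IsFinitelyGenerated R M :=
  let ⟨_, D₁, _, α, hα, _⟩ := h
  ⟨D₁, α, hα⟩

theorem IsFinitelyGenerated.isFinitelyPresented {M : Dᵒᵖ ⥤ ModuleCat.{v} R}
    (hker : ∀ (C₀ : D) (α : (linearYoneda R D).obj C₀ ⟶ M), KernelIsFinitelyGenerated R α)
    (h : IsFinitelyGenerated R M) : IsFinitelyPresented R M :=
  let ⟨D₁, α, hα⟩ := h
  let ⟨B, g, hg⟩ := hker D₁ α
  ⟨B, D₁, g, α, hα, hg⟩

end

theorem kernels_fg_of_subfunctor_of_representable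
    (hwk : HasWeakKernels (D := D))
    (M : Dᵒᵖ ⥤ ModuleCat.{v} R)
    (D₀ : D) (ι : M ⟶ (linearYoneda R D).obj D₀)
    (hι : ∀ X : Dᵒᵖ, Function.Injective (ι.app X)) :
    (∀ (C₀ : D) (α : (linearYoneda R D).obj C₀ ⟶ M), KernelIsFinitelyGenerated R α) ∧
    (IsFinitelyPresented R M ↔ IsFinitelyGenerated R M) :=
  have hker := fun _ => kernelIsFinitelyGenerated_of_injective_linearYoneda hwk hι
  ⟨hker, ⟨IsFinitelyPresented.isFinitelyGenerated, IsFinitelyGenerated.isFinitelyPresented hker⟩⟩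

end Paper
end

section
/- Let R be a commutative ring and D an R-linear triangulated category. Every suspended karoubian full subcategory S of D (i.e. S is closed under extensions, under the shift [1], and under direct summands, and idempotents in S split) which is precovering in D is coreflective: the inclusion S → D has a right adjoint. -/
/-!
Take an `S`-precover `g₀ : S₀ ⟶ D₀` with fibre `k : K ⟶ S₀`, an `S`-precover `g₁ : S₁ ⟶ K`, and a
triangle `S₁ ⟶ S₀ ⟶ C ⟶ S₁⟦1⟧` on `g₁ ≫ k`. Then `C` lies in `S`, being an extension of `S₀` and
`S₁⟦1⟧`, and `q : S₀ ⟶ C` kills every map from `S` that `g₀` kills, since such a map factors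
through `g₁ ≫ k`. Hence `g₀ = q ≫ c` with `c` again a precover, and for a lift `v` of `c` through
`g₀` the endomorphism `v ≫ q` of `C` is an idempotent fixing `c` and killing every map from `S`
that `c` kills. The summand of `C` it cuts out, which lies in `S` as `S` is karoubian, is then a
coreflection of `D₀` into `S`.
-/

open CategoryTheory CategoryTheory.Limits CategoryTheory.Pretriangulated Opposite

universe w v u

namespace Paper

variable {R : Type w} [CommRing R] {D : Type u} [Category.{v} D] [Preadditive D]
  [CategoryTheory.Linear R D] [HasZeroObject D] [HasShift D ℤ]
  [∀ n : ℤ, (shiftFunctor D n).Additive] [Pretriangulated D]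

section Category

variable {C : Type*} [Category C] (S : ObjectProperty C)

def IsPrecover {P Y : C} (p : P ⟶ Y) : Prop :=
  ∀ ⦃X : C⦄, S X → ∀ u : X ⟶ Y, ∃ v : X ⟶ P, v ≫ p = u

def IsCoreflection {P Y : C} (p : P ⟶ Y) : Prop :=
  S P ∧ ∀ ⦃X : C⦄, S X → Function.Bijective (fun w : X ⟶ P => w ≫ p)

lemma isLeftAdjoint_ι_of_forall_exists_isCoreflection
    (h : ∀ Y : C, ∃ (P : C) (p : P ⟶ Y), IsCoreflection S p) : S.ι.IsLeftAdjoint := by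
  refine Functor.isLeftAdjoint_of_rightAdjointObjIsDefined_eq_top (funext fun Y => ?_)
  obtain ⟨P, p, hP, hp⟩ := h Y
  let rep : (S.ι.op ⋙ yoneda.obj Y).RepresentableBy ⟨P, hP⟩ :=
    { homEquiv := fun {X} => S.fullyFaithfulι.homEquiv.trans (Equiv.ofBijective _ (hp X.property))
      homEquiv_comp := fun f g => Category.assoc _ _ _ }
  exact eq_true rep.isRepresentable

end Category

section Preadditive

variable {C : Type*} [Category C] [Preadditive C] (S : ObjectProperty C)

lemma IsPrecover.isCoreflection_comp_of_retract {P Y E : C} {p : P ⟶ Y} (hp : IsPrecover S p)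
    {e : P ⟶ P} (hep : e ≫ p = p) (he : ∀ ⦃X : C⦄, S X → ∀ z : X ⟶ P, z ≫ p = 0 → z ≫ e = 0)
    (hE : S E) {r : P ⟶ E} {i : E ⟶ P} (hri : r ≫ i = e) (hir : i ≫ r = 𝟙 E) :
    IsCoreflection S (i ≫ p) := by
  refine ⟨hE, fun X hX => ⟨fun w₁ w₂ hw => ?_, fun u => ?_⟩⟩
  · have hker : ((w₁ - w₂) ≫ i) ≫ p = 0 := by
      simpa only [Preadditive.sub_comp, Category.assoc, sub_eq_zero] using hw
    have hzero : (w₁ - w₂) ≫ i = 0 := by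
      simpa only [← hri, Category.assoc, reassoc_of% hir] using he hX _ hker
    rw [← sub_eq_zero]
    simpa only [Category.assoc, hir, Category.comp_id, zero_comp] using hzero =≫ r
  · obtain ⟨v, rfl⟩ := hp hX u
    exact ⟨v ≫ r, by simp only [Category.assoc, reassoc_of% hri, hep]⟩

end Preadditive

section Pretriangulated

variable (S : ObjectProperty D)

lemma comp_eq_zero_of_comp_eq_zero {K S₀ S₁ Y Q : D} {k : K ⟶ S₀} {g₀ : S₀ ⟶ Y}
    {h : Y ⟶ K⟦(1 : ℤ)⟧} (hT : Triangle.mk k g₀ h ∈ distTriang D) {g₁ : S₁ ⟶ K}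
    (hg₁ : IsPrecover S g₁) {q : S₀ ⟶ Q} (hq : g₁ ≫ k ≫ q = 0)
    ⦃X : D⦄ (hX : S X) (f : X ⟶ S₀) (hf : f ≫ g₀ = 0) : f ≫ q = 0 := by
  obtain ⟨f', rfl⟩ : ∃ f' : X ⟶ K, f = f' ≫ k := Triangle.coyoneda_exact₂ _ hT f hf
  obtain ⟨w, rfl⟩ := hg₁ hX f'
  simp only [Category.assoc, hq, comp_zero]

lemma exists_isCoreflection
    (hshift : ∀ X : D, S X → S (X⟦(1 : ℤ)⟧))
    (hext : ∀ T : Pretriangulated.Triangle D, T ∈ (distTriang D) →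
      S T.obj₁ → S T.obj₃ → S T.obj₂)
    (hkar : ∀ X : D, S X → ∀ e : X ⟶ X, e ≫ e = e →
      ∃ (Y : D) (_ : S Y) (p : X ⟶ Y) (i : Y ⟶ X), p ≫ i = e ∧ i ≫ p = 𝟙 Y)
    (hprecover : ∀ Y : D, ∃ (P : D) (_ : S P) (p : P ⟶ Y), IsPrecover S p) (Y : D) :
    ∃ (P : D) (p : P ⟶ Y), IsCoreflection S p := by
  obtain ⟨S₀, hS₀, g₀, hg₀⟩ := hprecover Y
  obtain ⟨K, k, δ₀, hT₀⟩ := distinguished_cocone_triangle₁ g₀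
  obtain ⟨S₁, hS₁, g₁, hg₁⟩ := hprecover K
  obtain ⟨C, q, δ₁, hT₁⟩ := distinguished_cocone_triangle (g₁ ≫ k)
  have hkg₀ : k ≫ g₀ = 0 := comp_distTriang_mor_zero₁₂ _ hT₀
  have hq : g₁ ≫ k ≫ q = 0 :=
    (Category.assoc _ _ _).symm.trans (comp_distTriang_mor_zero₁₂ _ hT₁)
  have hC : S C := hext _ (rot_of_distTriang _ hT₁) hS₀ (hshift _ hS₁)
  obtain ⟨c, hc⟩ : ∃ c : C ⟶ Y, g₀ = q ≫ c := Triangle.yoneda_exact₂ _ hT₁ g₀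
    ((Category.assoc g₁ k g₀).trans (by rw [hkg₀]; exact comp_zero))
  have hc_precover : IsPrecover S c := fun X hX u => by
    obtain ⟨v, rfl⟩ := hg₀ hX u
    exact ⟨v ≫ q, by rw [Category.assoc, ← hc]⟩
  obtain ⟨v, hv⟩ := hg₀ hC c
  have hq_kills := comp_eq_zero_of_comp_eq_zero S hT₀ hg₁ hq
  have hqvq : q ≫ v ≫ q = q := by
    have := hq_kills hS₀ (q ≫ v - 𝟙 S₀) (by simp only [Preadditive.sub_comp, Category.assoc,
      hv, ← hc, Category.id_comp, sub_self])
    rwa [Preadditive.sub_comp, Category.id_comp, sub_eq_zero, Category.assoc] at this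
  obtain ⟨P, hP, r, i, hri, hir⟩ := hkar C hC (v ≫ q) (by rw [Category.assoc, hqvq])
  refine ⟨P, i ≫ c, hc_precover.isCoreflection_comp_of_retract S ?_ ?_ hP hri hir⟩
  · rw [Category.assoc, ← hc, hv]
  · intro X hX z hz
    simpa only [Category.assoc] using hq_kills hX (z ≫ v) (by rw [Category.assoc, hv, hz])

end Pretriangulated

theorem coreflective_of_suspended_karoubian_precovering_general
    (S : D → Prop)
    -- `S` is closed under the shift `[1]`
    (hshift : ∀ X : D, S X → S (X⟦(1 : ℤ)⟧))
    -- `S` is closed under extensions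
    (hext : ∀ T : Pretriangulated.Triangle D, T ∈ (distTriang D) →
      S T.obj₁ → S T.obj₃ → S T.obj₂)
    -- idempotents in `S` split
    (hkar : ∀ X : D, S X → ∀ e : X ⟶ X, e ≫ e = e →
      ∃ (Y : D) (_ : S Y) (p : X ⟶ Y) (i : Y ⟶ X), p ≫ i = e ∧ i ≫ p = 𝟙 Y)
    -- `S` is precovering
    (hprecover : ∀ D₀ : D, ∃ (S₀ : D) (_ : S S₀) (p : S₀ ⟶ D₀),
      ∀ (X : D), S X → ∀ u : X ⟶ D₀, ∃ v : X ⟶ S₀, v ≫ p = u) :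
    ∃ G : D ⥤ ObjectProperty.FullSubcategory S, Nonempty (ObjectProperty.ι S ⊣ G) := by
  have := isLeftAdjoint_ι_of_forall_exists_isCoreflection S
    (exists_isCoreflection S hshift hext hkar hprecover)
  exact ⟨_, ⟨Adjunction.ofIsLeftAdjoint (ObjectProperty.ι S)⟩⟩

theorem coreflective_of_suspended_karoubian_precovering
    (S : D → Prop)
    -- `S` is closed under the shift `[1]`
    (hshift : ∀ X : D, S X → S (X⟦(1 : ℤ)⟧))
    -- `S` is closed under extensions
    (hext : ∀ T : Pretriangulated.Triangle D, T ∈ (distTriang D) →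
      S T.obj₁ → S T.obj₃ → S T.obj₂)
    -- `S` is closed under direct summands
    (hsmd : ∀ ⦃X Y : D⦄, S X → ∀ (s : Y ⟶ X) (r : X ⟶ Y), s ≫ r = 𝟙 Y → S Y)
    -- idempotents in `S` split
    (hkar : ∀ X : D, S X → ∀ e : X ⟶ X, e ≫ e = e →
      ∃ (Y : D) (_ : S Y) (p : X ⟶ Y) (i : Y ⟶ X), p ≫ i = e ∧ i ≫ p = 𝟙 Y)
    -- `S` is precovering
    (hprecover : ∀ D₀ : D, ∃ (S₀ : D) (_ : S S₀) (p : S₀ ⟶ D₀),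
      ∀ (X : D), S X → ∀ u : X ⟶ D₀, ∃ v : X ⟶ S₀, v ≫ p = u) :
    ∃ G : D ⥤ ObjectProperty.FullSubcategory S, Nonempty (ObjectProperty.ι S ⊣ G) :=
  coreflective_of_suspended_karoubian_precovering_general S hshift hext hkar hprecover

end Paper
end

section
/- Let R be a commutative ring, D an R-linear triangulated category, M : D → Mod-R a cohomological contravariant functor, and A a full subcategory of D with A[1] = A. Suppose that M is A-finitely generated and that, for every object D of D, the kernel of every natural transformation D(-,D) → M is also A-finitely generated. Then M is A^{*n}-finitely generated for every n ≥ 1. -/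
open CategoryTheory CategoryTheory.Limits CategoryTheory.Pretriangulated Opposite

universe w v u

namespace Paper

variable (R : Type w) [CommRing R] {D : Type u} [Category.{v} D] [Preadditive D]
  [CategoryTheory.Linear R D] [HasZeroObject D] [HasShift D ℤ]
  [∀ n : ℤ, (shiftFunctor D n).Additive] [Pretriangulated D]

/-- `M : D → Mod-R` (contravariant) is cohomological. -/
def IsCohomological (M : Dᵒᵖ ⥤ ModuleCat.{v} R) : Prop :=
  ∀ T : Pretriangulated.Triangle D, T ∈ (distTriang D) →
    Function.Exact (M.map T.mor₂.op) (M.map T.mor₁.op)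

variable (D)

/-- the closure of a class of objects under direct summands -/
def smdClosure (A : Set D) : Set D :=
  {Y | ∃ X ∈ A, ∃ (s : Y ⟶ X) (r : X ⟶ Y), s ≫ r = 𝟙 Y}

/-- `A * B`: objects `Y` fitting in a triangle `X → Y → Z → X[1]` with `X ∈ A`, `Z ∈ B`. -/
def starSets (A B : Set D) : Set D :=
  {Y | ∃ (X Z : D) (_ : X ∈ A) (_ : Z ∈ B) (f : X ⟶ Y) (g : Y ⟶ Z)
    (h : Z ⟶ X⟦(1 : ℤ)⟧), Pretriangulated.Triangle.mk f g h ∈ (distTriang D)}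

/-- `starPow A n = A^{*n}` (for `n ≥ 1`):  `A^{*1} = smd A` and
`A^{*(n+1)} = smd (A^{*n} * A^{*1})`. -/
def starPow (A : Set D) : ℕ → Set D
  | 0 => ∅
  | 1 => smdClosure D A
  | (n + 2) => smdClosure D (starSets D (starPow A (n + 1)) (smdClosure D A))

variable {D}

/-- `M` is `A`-finitely generated. -/
def IsRelFinitelyGenerated (A : Set D) (M : Dᵒᵖ ⥤ ModuleCat.{v} R) : Prop :=
  ∃ (A₀ : D) (_ : A₀ ∈ A) (α : (linearYoneda R D).obj A₀ ⟶ M),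
    ∀ X ∈ A, Function.Surjective (α.app (op X))

/-- The kernel of the natural transformation `β : D(-,D₀) → M` is `A`-finitely
generated. -/
def KernelIsRelFG (A : Set D) {M : Dᵒᵖ ⥤ ModuleCat.{v} R} {D₀ : D}
    (β : (linearYoneda R D).obj D₀ ⟶ M) : Prop :=
  ∃ (A₀ : D) (_ : A₀ ∈ A) (g : A₀ ⟶ D₀),
    (linearYoneda R D).map g ≫ β = 0 ∧
    ∀ X ∈ A, ∀ x : ((linearYoneda R D).obj D₀).obj (op X), β.app (op X) x = 0 →
      ∃ t : X ⟶ A₀, ((linearYoneda R D).map g).app (op X) t = x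

end Paper

/-!
Induction on `n`, carrying `α : D(-,B) → M` with `B ∈ A^{*n}` that is surjective on `A^{*n}`
and on `smd A`. The kernel of `α` is generated by some `g : A₀ → B` with `A₀ ∈ A`; in a triangle
`A₀ → B → C → A₀[1]` the element `α (𝟙 B)` lifts to `M C`, giving `β : D(-,C) → M` through which
`α` factors, with `C ∈ A^{*n} * A[1] ⊆ A^{*(n+1)}`. Surjectivity of `β` on `Y` in a triangle
`X → Y → Z → X[1]` with `X ∈ A^{*n}`, `Z ∈ smd A` is a diagram chase: lift the restriction of
`y` to `X` through `α`; the obstruction to extending the lift to `Y` is a morphism out of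
`Z[-1] ∈ smd A` in the kernel of `α`, hence killed by `p`; the remaining error comes from `M Z`,
which `β` reaches.
-/

namespace Paper

section

variable {D : Type u} [Category.{v} D]

lemma self_subset_smdClosure (A : Set D) : A ⊆ smdClosure D A :=
  fun X hX => ⟨X, hX, 𝟙 X, 𝟙 X, Category.id_comp _⟩

lemma shift_neg_one_mem_smdClosure [HasShift D ℤ] {A : Set D}
    (hA : A ⊆ (fun X : D => X⟦(1 : ℤ)⟧) '' A) {Z : D} (hZ : Z ∈ smdClosure D A) : Z⟦(-1 : ℤ)⟧ ∈ smdClosure D A := by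
  obtain ⟨_, hZA, s, r, hsr⟩ := hZ
  obtain ⟨Z', hZ', rfl⟩ := hA hZA
  let ε := (shiftFunctorCompIsoId D (1 : ℤ) (-1 : ℤ) (by norm_num)).app Z'
  refine ⟨Z', hZ', s⟦(-1 : ℤ)⟧' ≫ ε.hom, ε.inv ≫ r⟦(-1 : ℤ)⟧', ?_⟩
  rw [Category.assoc, ε.hom_inv_id_assoc, ← Functor.map_comp, hsr,
    CategoryTheory.Functor.map_id]

variable {R : Type w} [CommRing R] [Preadditive D] [CategoryTheory.Linear R D]
  {M : Dᵒᵖ ⥤ ModuleCat.{v} R}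

def IsSurjectiveOn {B : D} (α : (linearYoneda R D).obj B ⟶ M) (S : Set D) : Prop :=
  ∀ X ∈ S, Function.Surjective (α.app (op X))

lemma app_comp {B X Y : D} (α : (linearYoneda R D).obj B ⟶ M) (e : Y ⟶ X) (f : X ⟶ B) :
    α.app (op Y) (e ≫ f) = M.map e.op (α.app (op X) f) :=
  congrArg (fun φ => φ f) (α.naturality e.op)

lemma IsSurjectiveOn.smdClosure {B : D} {α : (linearYoneda R D).obj B ⟶ M} {S : Set D}
    (h : IsSurjectiveOn α S) : IsSurjectiveOn α (smdClosure D S) := by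
  rintro Y ⟨X, hX, s, r, hsr⟩ y
  obtain ⟨f, hf⟩ := h X hX (M.map r.op y)
  refine ⟨s ≫ f, ?_⟩
  rw [app_comp α s f, hf, ← ModuleCat.comp_apply, ← M.map_comp, ← op_comp, hsr, op_id,
    CategoryTheory.Functor.map_id, ModuleCat.id_apply]

lemma KernelIsRelFG.exists_lift_of_mem_smdClosure {A : Set D} {B : D}
    {α : (linearYoneda R D).obj B ⟶ M} (h : KernelIsRelFG R A α) :
    ∃ (A₀ : D) (_ : A₀ ∈ A) (g : A₀ ⟶ B), (linearYoneda R D).map g ≫ α = 0 ∧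
      ∀ X ∈ smdClosure D A, ∀ x : X ⟶ B, α.app (op X) x = 0 → ∃ t : X ⟶ A₀, t ≫ g = x := by
  obtain ⟨A₀, hA₀, g, hgα, hlift⟩ := h
  refine ⟨A₀, hA₀, g, hgα, ?_⟩
  rintro X ⟨X', hX', s, r, hsr⟩ x hx
  obtain ⟨t, ht⟩ := hlift X' hX' (r ≫ x) (by rw [app_comp α r x, hx, map_zero])
  exact ⟨s ≫ t, by rw [Category.assoc, show t ≫ g = r ≫ x from ht, ← Category.assoc, hsr,
    Category.id_comp]⟩

def linearYonedaHomOfElement (M : Dᵒᵖ ⥤ ModuleCat.{v} R) [M.Additive] [M.Linear R] {C : D}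
    (m : M.obj (op C)) : (linearYoneda R D).obj C ⟶ M where
  app X := ModuleCat.ofHom
    { toFun := fun f => M.map f.op m
      map_add' := fun f g => by
        change M.map (f + g).op m = M.map f.op m + M.map g.op m
        rw [op_add, M.map_add]
        rfl
      map_smul' := fun r f => by
        change M.map (r • f.op) m = r • M.map f.op m
        rw [M.map_smul]
        rfl }
  naturality X Y e := by
    ext f
    change M.map ((f : unop X ⟶ C).op ≫ e) m = M.map e (M.map (f : unop X ⟶ C).op m)
    rw [M.map_comp, ModuleCat.comp_apply]

lemma linearYonedaHomOfElement_app (M : Dᵒᵖ ⥤ ModuleCat.{v} R) [M.Additive] [M.Linear R]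
    {C X : D} (m : M.obj (op C)) (f : X ⟶ C) :
    (linearYonedaHomOfElement M m).app (op X) f = M.map f.op m := rfl

variable [HasZeroObject D] [HasShift D ℤ] [∀ n : ℤ, (shiftFunctor D n).Additive]
  [Pretriangulated D]

lemma exists_extension_along_mor₂ [M.Additive] [M.Linear R] (hM : IsCohomological R M)
    {A₀ B C : D} {g : A₀ ⟶ B} {p : B ⟶ C} {w : C ⟶ A₀⟦(1 : ℤ)⟧}
    (hT : Triangle.mk g p w ∈ distTriang D) (α : (linearYoneda R D).obj B ⟶ M)
    (hgα : (linearYoneda R D).map g ≫ α = 0) :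
    ∃ β : (linearYoneda R D).obj C ⟶ M, ∀ (X : D) (f : X ⟶ B),
      β.app (op X) (f ≫ p) = α.app (op X) f := by
  have hg : M.map g.op (α.app (op B) (𝟙 B)) = 0 := by
    have h := congrArg (fun φ => φ.app (op A₀) (𝟙 A₀)) hgα
    change α.app (op A₀) (𝟙 A₀ ≫ g) = (0 : M.obj (op A₀)) at h
    rw [← app_comp, Category.comp_id, ← h, Category.id_comp]
  obtain ⟨m, hm⟩ : ∃ m : M.obj (op C), M.map p.op m = α.app (op B) (𝟙 B) :=
    (hM _ hT _).mp hg
  refine ⟨linearYonedaHomOfElement M m, fun X f => ?_⟩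
  rw [linearYonedaHomOfElement_app, op_comp, M.map_comp, ModuleCat.comp_apply, hm, ← app_comp,
    Category.comp_id]

lemma surjective_app_obj₂ (hM : IsCohomological R M) {C : D}
    (β : (linearYoneda R D).obj C ⟶ M) {T : Triangle D} (hT : T ∈ distTriang D)
    (h₃ : Function.Surjective (β.app (op T.obj₃)))
    (h₁ : ∀ y : M.obj (op T.obj₂), ∃ v : T.obj₂ ⟶ C,
      β.app (op T.obj₁) (T.mor₁ ≫ v) = M.map T.mor₁.op y) :
    Function.Surjective (β.app (op T.obj₂)) := by
  intro y
  obtain ⟨v, hv⟩ := h₁ y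
  obtain ⟨z, hz⟩ : ∃ z, M.map T.mor₂.op z = y - β.app (op T.obj₂) v :=
    (hM T hT _).mp (by rw [map_sub, ← app_comp, hv, sub_self])
  obtain ⟨t : T.obj₃ ⟶ C, rfl⟩ := h₃ z
  refine ⟨v + T.mor₂ ≫ t, ?_⟩
  calc β.app (op T.obj₂) (v + T.mor₂ ≫ t)
      = β.app (op T.obj₂) v + M.map T.mor₂.op (β.app (op T.obj₃) t) :=
        (map_add _ _ _).trans (congrArg _ (app_comp β T.mor₂ t))
    _ = y := by rw [hz, add_sub_cancel]

lemma exists_comp_eq_mor₂_comp [M.Additive] {B A₀ C : D} (α : (linearYoneda R D).obj B ⟶ M)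
    {g : A₀ ⟶ B} {p : B ⟶ C} (hgp : g ≫ p = 0) {S : Triangle D} (hS : S ∈ distTriang D)
    (hlift : ∀ x : S.obj₁ ⟶ B, α.app (op S.obj₁) x = 0 → ∃ t : S.obj₁ ⟶ A₀, t ≫ g = x)
    {u : S.obj₂ ⟶ B} {y : M.obj (op S.obj₃)} (hu : α.app (op S.obj₂) u = M.map S.mor₂.op y) :
    ∃ v : S.obj₃ ⟶ C, u ≫ p = S.mor₂ ≫ v := by
  have hzero : α.app (op S.obj₁) (S.mor₁ ≫ u) = 0 := by
    rw [app_comp, hu, ← ModuleCat.comp_apply, ← M.map_comp, ← op_comp,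
      comp_distTriang_mor_zero₁₂ _ hS, op_zero, M.map_zero]
    rfl
  obtain ⟨t, ht⟩ := hlift _ hzero
  exact Triangle.yoneda_exact₂ _ hS (u ≫ p)
    (by rw [← Category.assoc, ← ht, Category.assoc, hgp, comp_zero])

theorem exists_generator_smdClosure_starSets [M.Additive] [M.Linear R]
    (hM : IsCohomological R M) {A : Set D} (hA1 : (fun X : D => X⟦(1 : ℤ)⟧) '' A = A)
    {P : Set D} {B : D} (hB : B ∈ P) (α : (linearYoneda R D).obj B ⟶ M)
    (hP : IsSurjectiveOn α P) (hA : IsSurjectiveOn α (smdClosure D A))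
    (hker : KernelIsRelFG R A α) :
    ∃ C ∈ smdClosure D (starSets D P (smdClosure D A)), ∃ β : (linearYoneda R D).obj C ⟶ M,
      IsSurjectiveOn β (smdClosure D (starSets D P (smdClosure D A))) ∧
        IsSurjectiveOn β (smdClosure D A) := by
  obtain ⟨A₀, hA₀, g, hgα, hlift⟩ := hker.exists_lift_of_mem_smdClosure
  obtain ⟨C, p, w, hT₀⟩ := distinguished_cocone_triangle g
  obtain ⟨β, hβ⟩ := exists_extension_along_mor₂ hM hT₀ α hgα
  have hβA : IsSurjectiveOn β (smdClosure D A) := fun X hX y => by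
    obtain ⟨t, rfl⟩ := hA X hX y
    exact ⟨t ≫ p, hβ X t⟩
  have hA₀1 : A₀⟦(1 : ℤ)⟧ ∈ smdClosure D A :=
    self_subset_smdClosure A (hA1 ▸ ⟨A₀, hA₀, rfl⟩)
  have hC : C ∈ starSets D P (smdClosure D A) :=
    ⟨B, A₀⟦(1 : ℤ)⟧, hB, hA₀1, p, w, _, rot_of_distTriang _ hT₀⟩
  refine ⟨C, self_subset_smdClosure _ hC, β, IsSurjectiveOn.smdClosure ?_, hβA⟩
  rintro Y ⟨X, Z, hX, hZ, f, q, h, hT⟩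
  refine surjective_app_obj₂ hM β hT (hβA Z hZ) fun y => ?_
  obtain ⟨u : X ⟶ B, hu⟩ := hP X hX (M.map f.op y)
  obtain ⟨v, hv⟩ : ∃ v : Y ⟶ C, u ≫ p = f ≫ v :=
    exists_comp_eq_mor₂_comp α (comp_distTriang_mor_zero₁₂ _ hT₀) (inv_rot_of_distTriang _ hT)
      (hlift _ (shift_neg_one_mem_smdClosure hA1.superset hZ)) hu
  exact ⟨v, show β.app (op X) (f ≫ v) = M.map f.op y by rw [← hv, hβ, hu]⟩

end

variable (R : Type w) [CommRing R] {D : Type u} [Category.{v} D] [Preadditive D]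
  [CategoryTheory.Linear R D] [HasZeroObject D] [HasShift D ℤ]
  [∀ n : ℤ, (shiftFunctor D n).Additive] [Pretriangulated D]

theorem relFG_starPow
    (M : Dᵒᵖ ⥤ ModuleCat.{v} R) [M.Additive] [M.Linear R]
    (hM : IsCohomological R M)
    (A : Set D) (hA1 : (fun X : D => X⟦(1 : ℤ)⟧) '' A = A)
    (hfg : IsRelFinitelyGenerated R A M)
    (hker : ∀ (D₀ : D) (β : (linearYoneda R D).obj D₀ ⟶ M), KernelIsRelFG R A β) :
    ∀ n : ℕ, 1 ≤ n → IsRelFinitelyGenerated R (starPow D A n) M := by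
  suffices key : ∀ n, 1 ≤ n → ∃ B ∈ starPow D A n, ∃ α : (linearYoneda R D).obj B ⟶ M,
      IsSurjectiveOn α (starPow D A n) ∧ IsSurjectiveOn α (smdClosure D A) by
    intro n hn
    obtain ⟨B, hB, α, hα, -⟩ := key n hn
    exact ⟨B, hB, α, hα⟩
  intro n hn
  induction n, hn using Nat.le_induction with
  | base =>
    obtain ⟨A₀, hA₀, α, hα⟩ := hfg
    have hαA : IsSurjectiveOn α (smdClosure D A) := IsSurjectiveOn.smdClosure hα
    exact ⟨A₀, self_subset_smdClosure A hA₀, α, hαA, hαA⟩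
  | succ n hn ih =>
    obtain ⟨k, rfl⟩ := Nat.exists_eq_add_of_le' hn
    obtain ⟨B, hB, α, hP, hA⟩ := ih
    exact exists_generator_smdClosure_starSets hM hA1 hB α hP hA (hker B α)

end Paper
end
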